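/- Let n ≥ 1 be odd, let 0 ≤ θ_0 < θ_1 < ... < θ_{n-1} < 2π be real nodes, define β_k(θ) = ((−1)^k Π_{p≠k} sin((θ − θ_p)/2)) / (Σ_{j=0}^{n-1} (−1)^j Π_{p≠j} sin((θ − θ_p)/2)), b_{k,j}(θ) = (2^j/j!) sin^j((θ − θ_k)/2) · β_k(θ)^{j+1}, and (D_j^s)_{ik} := the s-th iterated derivative of b_{k,j} at θ_i. Then for all j ∈ ℕ, all s > j, and all distinct indices i ≠ k: (D_j^s)_{ik} = (1/sin((θ_i − θ_k)/2)) · [ (−1)^{(k+i)(j+1)} Σ_{q=0}^{⌊(s−j−1)/2⌋} C(s, 2q+1) ((−1)^q / 2^{2q+1}) (D_j^{s−2q−1})_{ii} − Σ_{q=j}^{s−1} C(s, s−q) · g_k^{(s−q)}(θ_i) · (D_j^q)_{ik} ], where g_k(θ) = sin((θ − θ_k)/2), g_k^{(r)} denotes its r-th iterated derivative, and C(·,·) is the binomial coefficient. -/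

import Mathlib

open scoped BigOperators

/-- The pole-free form of Berrut's trigonometric basis function for odd `n`. -/
noncomputable def berrutBasisOdd (n : ℕ) (θ : Fin n → ℝ) (i : Fin n) (t : ℝ) : ℝ :=
  ((-1 : ℝ) ^ (i : ℕ) * ∏ p ∈ Finset.univ.erase i, Real.sin ((t - θ p) / 2)) /
    (∑ j : Fin n, (-1 : ℝ) ^ (j : ℕ) *
      ∏ p ∈ Finset.univ.erase j, Real.sin ((t - θ p) / 2))

/-- The trigonometric Hermite basis for odd `n`. -/
noncomputable def trigHermiteBasisOdd (n : ℕ) (θ : Fin n → ℝ) (k : Fin n) (j : ℕ)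
    (t : ℝ) : ℝ :=
  ((2 : ℝ) ^ j / (Nat.factorial j : ℝ)) * Real.sin ((t - θ k) / 2) ^ j *
    berrutBasisOdd n θ k t ^ (j + 1)

/-- The entries `(D_j^s)_{ik} = b_{k,j}^{(s)}(θ_i)` of the differentiation matrices. -/
noncomputable def diffMatOdd (n : ℕ) (θ : Fin n → ℝ) (j s : ℕ) (i k : Fin n) : ℝ :=
  iteratedDeriv s (trigHermiteBasisOdd n θ k j) (θ i)

/-!
Away from the zeros of the common denominator `S` of Berrut's basis,
`g_k b_{k,j} = (2^j/j!) (-1)^{k(j+1)} (∏_p g_p / S)^{j+1}`, so that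
`g_k b_{k,j} = (-1)^{(k+i)(j+1)} g_i b_{i,j}` holds identically. Differentiate this `s` times at
`θ_i` by Leibniz's rule. On the left, `β_k(θ_i) = 0` makes `b_{k,j}` vanish to order `j + 1`, so
only `g_k(θ_i) (D_j^s)_{ik}` and the terms with `q ≥ j` survive. On the right, the even
derivatives of `g_i` vanish at `θ_i`, the odd ones are `(-1)^q / 2^{2q+1}`, and `b_{i,j}` vanishes
to order `j`. Since `g_k(θ_i) ≠ 0` for distinct nodes in `[0, 2π)`, one can solve for
`(D_j^s)_{ik}`.
-/

open scoped ContDiff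
open Real Finset

section Leibniz

variable {𝕜 𝔸 : Type*} [NontriviallyNormedField 𝕜] [NormedRing 𝔸] [NormedAlgebra 𝕜 𝔸]
  {f g : 𝕜 → 𝔸} {x : 𝕜}

theorem iteratedDeriv_mul_eq_zero_of_lt {a b : ℕ} (hf : ContDiffAt 𝕜 ∞ f x)
    (hg : ContDiffAt 𝕜 ∞ g x) (hfa : ∀ q < a, iteratedDeriv q f x = 0)
    (hgb : ∀ q < b, iteratedDeriv q g x = 0) :
    ∀ q < a + b, iteratedDeriv q (fun t => f t * g t) x = 0 := by
  intro q hq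
  rw [iteratedDeriv_fun_mul (hf.of_le (mod_cast le_top)) (hg.of_le (mod_cast le_top))]
  refine sum_eq_zero fun r hr => ?_
  rcases lt_or_ge r a with h | h
  · rw [hfa r h, mul_zero, zero_mul]
  · rw [hgb (q - r) (by simp at hr; omega), mul_zero]

theorem iteratedDeriv_pow_eq_zero_of_lt (hf : ContDiffAt 𝕜 ∞ f x) (hfx : f x = 0) (p : ℕ) :
    ∀ q < p, iteratedDeriv q (fun t => f t ^ p) x = 0 := by
  induction p with
  | zero => intro q hq; omega
  | succ p ih =>
    simp only [pow_succ]
    refine iteratedDeriv_mul_eq_zero_of_lt (hf.pow p) hf ih fun q hq => ?_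
    rw [Nat.lt_one_iff.mp hq, iteratedDeriv_zero, hfx]

theorem iteratedDeriv_mul_eq_add_sum_Ico {j : ℕ} (hf : ContDiffAt 𝕜 ∞ f x)
    (hg : ContDiffAt 𝕜 ∞ g x) (hgj : ∀ q < j, iteratedDeriv q g x = 0) (s : ℕ) :
    iteratedDeriv s (fun t => f t * g t) x = f x * iteratedDeriv s g x +
      ∑ q ∈ Ico j s,
        (s.choose (s - q) : 𝔸) * iteratedDeriv (s - q) f x * iteratedDeriv q g x := by
  have reflect : ∑ m ∈ range (s + 1),
        (s.choose m : 𝔸) * iteratedDeriv m f x * iteratedDeriv (s - m) g x =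
      ∑ q ∈ range (s + 1),
        (s.choose (s - q) : 𝔸) * iteratedDeriv (s - q) f x * iteratedDeriv q g x := by
    rw [← sum_range_reflect]
    refine sum_congr rfl fun q hq => ?_
    rw [mem_range] at hq
    rw [show s + 1 - 1 - q = s - q by omega, Nat.sub_sub_self (by omega)]
  have drop_low : ∑ q ∈ range s,
        (s.choose (s - q) : 𝔸) * iteratedDeriv (s - q) f x * iteratedDeriv q g x =
      ∑ q ∈ Ico j s,
        (s.choose (s - q) : 𝔸) * iteratedDeriv (s - q) f x * iteratedDeriv q g x := by
    rcases le_or_gt j s with hjs | hjs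
    · rw [range_eq_Ico]
      refine (sum_subset (Ico_subset_Ico (Nat.zero_le j) le_rfl) fun q hq hqj => ?_).symm
      rw [hgj q (by simp_all), mul_zero]
    · rw [Ico_eq_empty_of_le hjs.le, sum_empty]
      exact sum_eq_zero fun q hq => by rw [hgj q (by simp at hq; omega), mul_zero]
  rw [iteratedDeriv_fun_mul (hf.of_le (mod_cast le_top)) (hg.of_le (mod_cast le_top)), reflect,
    sum_range_succ, drop_low, Nat.sub_self, Nat.choose_zero_right, iteratedDeriv_zero,
    Nat.cast_one, one_mul, add_comm]

end Leibniz

theorem sin_sub_div_two_ne_zero {x y : ℝ} (hx0 : 0 ≤ x) (hx : x < 2 * π) (hy0 : 0 ≤ y)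
    (hy : y < 2 * π) (hxy : x ≠ y) : sin ((x - y) / 2) ≠ 0 := by
  rw [Ne, sin_eq_zero_iff_of_lt_of_lt (by linarith) (by linarith)]
  exact fun h => hxy (by linarith)

theorem iteratedDeriv_sin_sub_div_two (c x : ℝ) (m : ℕ) :
    iteratedDeriv m (fun t => sin ((t - c) / 2)) x =
      (1 / 2) ^ m * iteratedDeriv m sin ((x - c) / 2) := by
  have h := congrFun (iteratedDeriv_comp_sub_const m (fun u => sin (1 / 2 * u)) c) x
  rw [iteratedDeriv_comp_const_mul contDiff_sin] at h
  simpa [div_eq_inv_mul] using h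

theorem iteratedDeriv_even_sin_sub_div_two (c : ℝ) (q : ℕ) :
    iteratedDeriv (2 * q) (fun t => sin ((t - c) / 2)) c = 0 := by
  simp [iteratedDeriv_sin_sub_div_two]

theorem iteratedDeriv_odd_sin_sub_div_two (c : ℝ) (q : ℕ) :
    iteratedDeriv (2 * q + 1) (fun t => sin ((t - c) / 2)) c = (-1) ^ q / 2 ^ (2 * q + 1) := by
  simp [iteratedDeriv_sin_sub_div_two]
  ring

theorem iteratedDeriv_sin_sub_div_two_mul {g : ℝ → ℝ} {c : ℝ} {j s : ℕ}
    (hg : ContDiffAt ℝ ∞ g c) (hgj : ∀ q < j, iteratedDeriv q g c = 0) (hjs : j < s) :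
    iteratedDeriv s (fun t => sin ((t - c) / 2) * g t) c =
      ∑ q ∈ range ((s - j - 1) / 2 + 1),
        (s.choose (2 * q + 1) : ℝ) * ((-1) ^ q / 2 ^ (2 * q + 1)) *
          iteratedDeriv (s - 2 * q - 1) g c := by
  have hsin : ContDiffAt ℝ ∞ (fun t => sin ((t - c) / 2)) c := by fun_prop
  have hodd_image :
      (range ((s - j - 1) / 2 + 1)).image (fun q => 2 * q + 1) ⊆ range (s + 1) := by
    intro m hm
    simp only [mem_image, mem_range] at hm ⊢
    obtain ⟨q, hq, rfl⟩ := hm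
    omega
  rw [iteratedDeriv_fun_mul (hsin.of_le (mod_cast le_top)) (hg.of_le (mod_cast le_top)),
    ← sum_subset hodd_image, sum_image fun a _ b _ h => by omega]
  · refine sum_congr rfl fun q _ => ?_
    rw [iteratedDeriv_odd_sin_sub_div_two, Nat.sub_sub]
  · intro m hm hm_odd
    rcases Nat.even_or_odd' m with ⟨q, rfl | rfl⟩
    · rw [iteratedDeriv_even_sin_sub_div_two, mul_zero, zero_mul]
    · have hq_large : ¬ q < (s - j - 1) / 2 + 1 := fun h =>
        hm_odd (mem_image_of_mem _ (mem_range.mpr h))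
      rw [hgj _ (by simp at hm; omega), mul_zero]

section Berrut

variable {n : ℕ} (θ : Fin n → ℝ)

noncomputable def berrutDenom (t : ℝ) : ℝ :=
  ∑ j : Fin n, (-1 : ℝ) ^ (j : ℕ) * ∏ p ∈ univ.erase j, sin ((t - θ p) / 2)

theorem berrutBasisOdd_eq_div (i : Fin n) (t : ℝ) :
    berrutBasisOdd n θ i t =
      (-1) ^ (i : ℕ) * (∏ p ∈ univ.erase i, sin ((t - θ p) / 2)) / berrutDenom θ t :=
  rfl

theorem trigHermiteBasisOdd_eq_const_mul (k : Fin n) (j : ℕ) :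
    trigHermiteBasisOdd n θ k j = fun t =>
      2 ^ j / j.factorial * (sin ((t - θ k) / 2) ^ j * berrutBasisOdd n θ k t ^ (j + 1)) := by
  funext t
  rw [trigHermiteBasisOdd, mul_assoc]

theorem prod_erase_sin_node_of_ne {i m : Fin n} (hmi : m ≠ i) :
    ∏ p ∈ univ.erase m, sin ((θ i - θ p) / 2) = 0 :=
  prod_eq_zero (mem_erase.mpr ⟨hmi.symm, mem_univ i⟩) (by simp)

theorem berrutDenom_node (i : Fin n) :
    berrutDenom θ (θ i) = (-1) ^ (i : ℕ) * ∏ p ∈ univ.erase i, sin ((θ i - θ p) / 2) :=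
  sum_eq_single i (fun m _ hmi => by rw [prod_erase_sin_node_of_ne θ hmi, mul_zero])
    (fun h => absurd (mem_univ i) h)

theorem berrutBasisOdd_node_of_ne {i m : Fin n} (hmi : m ≠ i) :
    berrutBasisOdd n θ m (θ i) = 0 := by
  rw [berrutBasisOdd_eq_div, prod_erase_sin_node_of_ne θ hmi, mul_zero, zero_div]

theorem contDiffAt_berrutBasisOdd {t : ℝ} (ht : berrutDenom θ t ≠ 0) (i : Fin n) :
    ContDiffAt ℝ ∞ (berrutBasisOdd n θ i) t := by
  unfold berrutBasisOdd
  refine ContDiffAt.div ?_ ?_ ht <;> fun_prop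

theorem contDiffAt_trigHermiteBasisOdd {t : ℝ} (ht : berrutDenom θ t ≠ 0) (k : Fin n)
    (j : ℕ) : ContDiffAt ℝ ∞ (trigHermiteBasisOdd n θ k j) t := by
  have := contDiffAt_berrutBasisOdd θ ht k
  unfold trigHermiteBasisOdd
  fun_prop

theorem sin_mul_trigHermiteBasisOdd (m : Fin n) (j : ℕ) (t : ℝ) :
    sin ((t - θ m) / 2) * trigHermiteBasisOdd n θ m j t =
      (-1) ^ ((m : ℕ) * (j + 1)) * (2 ^ j / j.factorial *
        ((∏ p, sin ((t - θ p) / 2)) / berrutDenom θ t) ^ (j + 1)) := by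
  rw [trigHermiteBasisOdd, berrutBasisOdd_eq_div, ← mul_prod_erase univ _ (mem_univ m), pow_mul]
  ring

theorem sin_mul_trigHermiteBasisOdd_eq_neg_one_pow_mul (j : ℕ) (i k : Fin n) :
    (fun t => sin ((t - θ k) / 2) * trigHermiteBasisOdd n θ k j t) =
      fun t => (-1) ^ (((k : ℕ) + i) * (j + 1)) *
        (sin ((t - θ i) / 2) * trigHermiteBasisOdd n θ i j t) := by
  have hsign : (-1 : ℝ) ^ ((k : ℕ) * (j + 1)) =
      (-1) ^ (((k : ℕ) + i) * (j + 1)) * (-1) ^ ((i : ℕ) * (j + 1)) := by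
    rw [← pow_add, show ((k : ℕ) + i) * (j + 1) + i * (j + 1) =
        k * (j + 1) + 2 * (i * (j + 1)) by ring,
      pow_add, pow_mul (-1 : ℝ) 2, neg_one_sq, one_pow, mul_one]
  funext t
  rw [sin_mul_trigHermiteBasisOdd, sin_mul_trigHermiteBasisOdd, hsign, mul_assoc]

variable {θ}

theorem berrutDenom_node_ne_zero (hθ : Pairwise fun p q => sin ((θ p - θ q) / 2) ≠ 0)
    (i : Fin n) : berrutDenom θ (θ i) ≠ 0 := by
  rw [berrutDenom_node]
  exact mul_ne_zero (pow_ne_zero _ (by norm_num))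
    (prod_ne_zero_iff.mpr fun p hp => hθ (mem_erase.mp hp).1.symm)

theorem iteratedDeriv_trigHermiteBasisOdd_node_of_ne
    (hθ : Pairwise fun p q => sin ((θ p - θ q) / 2) ≠ 0) {i k : Fin n} (hki : k ≠ i)
    (j : ℕ) : ∀ q ≤ j, iteratedDeriv q (trigHermiteBasisOdd n θ k j) (θ i) = 0 := by
  intro q hq
  have hβ := contDiffAt_berrutBasisOdd θ (berrutDenom_node_ne_zero hθ i) k
  rw [trigHermiteBasisOdd_eq_const_mul, iteratedDeriv_const_mul_field,
    iteratedDeriv_mul_eq_zero_of_lt (a := 0) (by fun_prop) (hβ.pow _) (by simp)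
      (iteratedDeriv_pow_eq_zero_of_lt hβ (berrutBasisOdd_node_of_ne θ hki) (j + 1)) q
      (by omega),
    mul_zero]

theorem iteratedDeriv_trigHermiteBasisOdd_node_self
    (hθ : Pairwise fun p q => sin ((θ p - θ q) / 2) ≠ 0) (i : Fin n) (j : ℕ) :
    ∀ q < j, iteratedDeriv q (trigHermiteBasisOdd n θ i j) (θ i) = 0 := by
  intro q hq
  have hβ := contDiffAt_berrutBasisOdd θ (berrutDenom_node_ne_zero hθ i) i
  have hsin : ContDiffAt ℝ ∞ (fun t => sin ((t - θ i) / 2)) (θ i) := by fun_prop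
  rw [trigHermiteBasisOdd_eq_const_mul, iteratedDeriv_const_mul_field,
    iteratedDeriv_mul_eq_zero_of_lt (b := 0) (hsin.pow j) (hβ.pow _)
      (iteratedDeriv_pow_eq_zero_of_lt hsin (by simp) j) (by simp) q (by omega),
    mul_zero]

end Berrut

theorem diffMatOdd_recursion_general
    (n : ℕ)
    (θ : Fin n → ℝ) (hθ : StrictMono θ)
    (hθ0 : ∀ p, 0 ≤ θ p) (hθ2π : ∀ p, θ p < 2 * Real.pi) :
    ∀ (j s : ℕ), j < s → ∀ (i k : Fin n), i ≠ k →
      diffMatOdd n θ j s i k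
        = (1 / Real.sin ((θ i - θ k) / 2)) *
            ((-1 : ℝ) ^ (((k : ℕ) + (i : ℕ)) * (j + 1)) *
              (∑ q ∈ Finset.range ((s - j - 1) / 2 + 1),
                (s.choose (2 * q + 1) : ℝ) * ((-1 : ℝ) ^ q / 2 ^ (2 * q + 1)) *
                  diffMatOdd n θ j (s - 2 * q - 1) i i)
              - ∑ q ∈ Finset.Ico j s,
                (s.choose (s - q) : ℝ) *
                  iteratedDeriv (s - q) (fun t => Real.sin ((t - θ k) / 2)) (θ i) *
                  diffMatOdd n θ j q i k) := by
  intro j s hjs i k hik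
  have hsep : Pairwise fun p q => sin ((θ p - θ q) / 2) ≠ 0 := fun p q hpq =>
    sin_sub_div_two_ne_zero (hθ0 p) (hθ2π p) (hθ0 q) (hθ2π q) (hθ.injective.ne hpq)
  have hS := berrutDenom_node_ne_zero hsep i
  have key := congrArg (iteratedDeriv s · (θ i))
    (sin_mul_trigHermiteBasisOdd_eq_neg_one_pow_mul θ j i k)
  rw [iteratedDeriv_mul_eq_add_sum_Ico (by fun_prop) (contDiffAt_trigHermiteBasisOdd θ hS k j)
      (fun q hq => iteratedDeriv_trigHermiteBasisOdd_node_of_ne hsep hik.symm j q hq.le) s,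
    iteratedDeriv_const_mul_field,
    iteratedDeriv_sin_sub_div_two_mul (contDiffAt_trigHermiteBasisOdd θ hS i j)
      (iteratedDeriv_trigHermiteBasisOdd_node_self hsep i j) hjs] at key
  rw [one_div, ← div_eq_inv_mul, eq_div_iff (hsep hik)]
  unfold diffMatOdd
  linear_combination key

/-- odd `n` case of the differentiation-matrix recursion:
for all `s > j` and `i ≠ k`,
`(D_j^s)_{ik} = csc((θ_i−θ_k)/2) [ (−1)^{(k+i)(j+1)} Σ_{q=0}^{⌊(s−j−1)/2⌋}
C(s,2q+1) ((−1)^q/2^{2q+1}) (D_j^{s−2q−1})_{ii}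
− Σ_{q=j}^{s−1} C(s,s−q) g_k^{(s−q)}(θ_i) (D_j^q)_{ik} ]`
with `g_k(θ) = sin((θ − θ_k)/2)`. -/
theorem diffMatOdd_recursion
    (n : ℕ) (hn : 1 ≤ n) (hodd : Odd n)
    (θ : Fin n → ℝ) (hθ : StrictMono θ)
    (hθ0 : ∀ p, 0 ≤ θ p) (hθ2π : ∀ p, θ p < 2 * Real.pi) :
    ∀ (j s : ℕ), j < s → ∀ (i k : Fin n), i ≠ k →
      diffMatOdd n θ j s i k
        = (1 / Real.sin ((θ i - θ k) / 2)) *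
            ((-1 : ℝ) ^ (((k : ℕ) + (i : ℕ)) * (j + 1)) *
              (∑ q ∈ Finset.range ((s - j - 1) / 2 + 1),
                (s.choose (2 * q + 1) : ℝ) * ((-1 : ℝ) ^ q / 2 ^ (2 * q + 1)) *
                  diffMatOdd n θ j (s - 2 * q - 1) i i)
              - ∑ q ∈ Finset.Ico j s,
                (s.choose (s - q) : ℝ) *
                  iteratedDeriv (s - q) (fun t => Real.sin ((t - θ k) / 2)) (θ i) *
                  diffMatOdd n θ j q i k) :=
  diffMatOdd_recursion_general n θ hθ hθ0 hθ2π
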